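/- arXiv:2507.22757 — 2 statements merged into one kernel-verified Lean document; each statement's English description precedes it below -/
import Mathlib

section
/- For any integer q > 1 and any u ∈ H^2(0,T;L^q(Ω)) with u(0)=0, u_t(0)=0, and any ε > 0, one has ∫_0^T e^{-t/ε} ‖u(t)‖_{L^q(Ω)}^q dt ≤ (T^{2q}/(2q^2)) ∫_0^T e^{-t/ε} ‖u_tt(t)‖_{L^q(Ω)}^q dt. -/
/-!
Writing `u t = ∫₀ᵗ ∫₀ˢ u''`, Jensen's inequality for `x ↦ x ^ q`, applied once to the inner and
once to the outer integral, gives `‖u t‖ ^ q ≤ t ^ (2q-1) / q * ∫₀ᵗ ‖u''‖ ^ q`. As the weight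
`r ↦ exp (-r / ε)` is decreasing, `exp (-t / ε) * ∫₀ᵗ ‖u''‖ ^ q ≤ ∫₀ᵀ exp (-r / ε) * ‖u''‖ ^ q`,
and integrating `t ^ (2q-1) / q` over `[0, T]` produces the constant `T ^ (2q) / (2 q²)`.
-/

open MeasureTheory Real Set

theorem IntervalIntegrable.of_pow {f : ℝ → ℝ} {a b : ℝ} {q : ℕ} (hq : q ≠ 0)
    (hf : ∀ x, 0 ≤ f x) (h : IntervalIntegrable (fun x => f x ^ q) volume a b) :
    IntervalIntegrable f volume a b := by
  have hm : AEStronglyMeasurable f (volume.restrict (uIoc a b)) := by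
    have := (h.def'.aestronglyMeasurable.aemeasurable.pow_const (q⁻¹ : ℝ)).aestronglyMeasurable
    simpa only [Real.pow_rpow_inv_natCast (hf _) hq] using this
  refine ((intervalIntegrable_const (c := (1 : ℝ))).add h).mono_fun' hm
    (.of_forall fun x => ?_)
  simp only [Real.norm_of_nonneg (hf x)]
  rcases le_total (f x) 1 with h1 | h1
  · linarith [pow_nonneg (hf x) q]
  · linarith [le_self_pow₀ h1 hq]

theorem pow_intervalIntegral_le {f : ℝ → ℝ} {a b : ℝ} {q : ℕ} (hab : a ≤ b) (hq : q ≠ 0)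
    (hf : ∀ x ∈ Ioc a b, 0 ≤ f x) (hfi : IntervalIntegrable f volume a b)
    (hfq : IntervalIntegrable (fun x => f x ^ q) volume a b) :
    (∫ x in a..b, f x) ^ q ≤ (b - a) ^ (q - 1) * ∫ x in a..b, f x ^ q := by
  rcases hab.eq_or_lt with rfl | hab
  · simp [zero_pow hq]
  have hvol : volume.real (Ioc a b) = b - a := by simp [hab.le]
  have jensen := (convexOn_pow q).map_set_average_le (continuous_pow q).continuousOn isClosed_Ici
    (by simp [hab]) (by simp) ((ae_restrict_iff' measurableSet_Ioc).2 (.of_forall hf))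
    ((intervalIntegrable_iff_integrableOn_Ioc_of_le hab.le).1 hfi)
    ((intervalIntegrable_iff_integrableOn_Ioc_of_le hab.le).1 hfq)
  simp only [setAverage_eq, hvol, smul_eq_mul] at jensen
  rw [intervalIntegral.integral_of_le hab.le, intervalIntegral.integral_of_le hab.le]
  have hba : 0 < b - a := sub_pos.2 hab
  calc (∫ x in Ioc a b, f x) ^ q = (b - a) ^ q * ((b - a)⁻¹ * ∫ x in Ioc a b, f x) ^ q := by
        rw [mul_pow, ← mul_assoc, ← mul_pow, mul_inv_cancel₀ hba.ne', one_pow, one_mul]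
    _ ≤ (b - a) ^ q * ((b - a)⁻¹ * ∫ x in Ioc a b, f x ^ q) := by gcongr
    _ = (b - a) ^ (q - 1) * ∫ x in Ioc a b, f x ^ q := by
        rw [← pow_sub_one_mul hq]
        field_simp

theorem mul_intervalIntegral_le_of_antitoneOn {w g : ℝ → ℝ} {a b : ℝ} (hab : a ≤ b)
    (hw : AntitoneOn w (Icc a b)) (hg : ∀ x ∈ Icc a b, 0 ≤ g x)
    (hgi : IntervalIntegrable g volume a b)
    (hwgi : IntervalIntegrable (fun x => w x * g x) volume a b) :
    w b * ∫ x in a..b, g x ≤ ∫ x in a..b, w x * g x := by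
  rw [← intervalIntegral.integral_const_mul]
  exact intervalIntegral.integral_mono_on hab (hgi.const_mul _) hwgi fun x hx =>
    mul_le_mul_of_nonneg_right (hw hx (right_mem_Icc.2 hab) hx.2) (hg x hx)

section

variable {X : Type*} [NormedAddCommGroup X] [NormedSpace ℝ X]

theorem norm_integral_integral_pow_le {g : ℝ → X} {q : ℕ} (hq : q ≠ 0) {t : ℝ} (ht : 0 ≤ t)
    (hgq : IntervalIntegrable (fun r => ‖g r‖ ^ q) volume 0 t) :
    ‖∫ s in 0..t, ∫ r in 0..s, g r‖ ^ q ≤ t ^ (2 * q - 1) / q * ∫ r in 0..t, ‖g r‖ ^ q := by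
  set W : ℝ → ℝ := fun s => ∫ r in 0..s, ‖g r‖
  set G := ∫ r in 0..t, ‖g r‖ ^ q
  have hg : IntervalIntegrable (fun r => ‖g r‖) volume 0 t := hgq.of_pow hq fun _ => norm_nonneg _
  have hWc : ContinuousOn W (Icc 0 t) := by
    simpa only [uIcc_of_le ht] using
      intervalIntegral.continuousOn_primitive_interval' hg left_mem_uIcc
  have hsub : ∀ s ∈ Icc 0 t, uIcc 0 s ⊆ uIcc 0 t := fun s hs => by
    simpa only [uIcc_of_le hs.1, uIcc_of_le ht] using Icc_subset_Icc le_rfl hs.2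
  have hW0 : ∀ s ∈ Icc 0 t, 0 ≤ W s := fun s hs =>
    intervalIntegral.integral_nonneg hs.1 fun _ _ => norm_nonneg _
  have hWq : ∀ s ∈ Icc 0 t, W s ^ q ≤ s ^ (q - 1) * G := fun s hs =>
    calc W s ^ q ≤ (s - 0) ^ (q - 1) * ∫ r in 0..s, ‖g r‖ ^ q :=
          pow_intervalIntegral_le hs.1 hq (fun _ _ => norm_nonneg _) (hg.mono_set (hsub s hs))
            (hgq.mono_set (hsub s hs))
      _ ≤ s ^ (q - 1) * G := by
          rw [sub_zero]
          exact mul_le_mul_of_nonneg_left (intervalIntegral.integral_mono_interval le_rfl hs.1 hs.2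
            (.of_forall fun _ => by positivity) hgq) (pow_nonneg hs.1 _)
  have hWqint : ∫ s in 0..t, W s ^ q ≤ t ^ q / q * G := calc
    _ ≤ ∫ s in 0..t, s ^ (q - 1) * G :=
        intervalIntegral.integral_mono_on ht ((hWc.pow q).intervalIntegrable_of_Icc ht)
          ((by fun_prop : Continuous fun s : ℝ => s ^ (q - 1) * G).intervalIntegrable 0 t) hWq
    _ = t ^ q / q * G := by
        rw [intervalIntegral.integral_mul_const, integral_pow, Nat.sub_add_cancel
          (Nat.one_le_iff_ne_zero.2 hq), Nat.cast_sub (Nat.one_le_iff_ne_zero.2 hq)]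
        simp [zero_pow hq]
  calc ‖∫ s in 0..t, ∫ r in 0..s, g r‖ ^ q ≤ (∫ s in 0..t, W s) ^ q := by
        gcongr
        exact intervalIntegral.norm_integral_le_of_norm_le ht
          (.of_forall fun s hs => intervalIntegral.norm_integral_le_integral_norm hs.1.le)
          (hWc.intervalIntegrable_of_Icc ht)
    _ ≤ (t - 0) ^ (q - 1) * ∫ s in 0..t, W s ^ q :=
        pow_intervalIntegral_le ht hq (fun s hs => hW0 s (Ioc_subset_Icc_self hs))
          (hWc.intervalIntegrable_of_Icc ht) ((hWc.pow q).intervalIntegrable_of_Icc ht)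
    _ ≤ t ^ (q - 1) * (t ^ q / q * G) := by rw [sub_zero]; gcongr
    _ = t ^ (2 * q - 1) / q * G := by
        rw [show 2 * q - 1 = q - 1 + q by omega, pow_add]
        ring

theorem exp_mul_norm_integral_integral_pow_le {g : ℝ → X} {q : ℕ} (hq : q ≠ 0) {ε t T : ℝ}
    (hε : 0 < ε) (ht : t ∈ Icc 0 T)
    (hwgq : IntervalIntegrable (fun r => exp (-r / ε) * ‖g r‖ ^ q) volume 0 T) :
    exp (-t / ε) * ‖∫ s in 0..t, ∫ r in 0..s, g r‖ ^ q ≤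
      t ^ (2 * q - 1) / q * ∫ r in 0..T, exp (-r / ε) * ‖g r‖ ^ q := by
  have hsub : uIcc 0 t ⊆ uIcc 0 T := by
    simpa only [uIcc_of_le ht.1, uIcc_of_le (ht.1.trans ht.2)] using Icc_subset_Icc le_rfl ht.2
  have hgq : IntervalIntegrable (fun r => ‖g r‖ ^ q) volume 0 T := by
    convert hwgq.continuousOn_mul (continuous_exp.comp (continuous_id.div_const ε)).continuousOn
      using 1
    ext r
    rw [Function.comp_apply, id, ← mul_assoc, ← exp_add, neg_div, add_neg_cancel, exp_zero,
      one_mul]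
  have hexp : AntitoneOn (fun r => exp (-r / ε)) (Icc 0 t) := fun x _ y _ hxy =>
    exp_le_exp.2 (div_le_div_of_nonneg_right (neg_le_neg hxy) hε.le)
  have hcoef : 0 ≤ t ^ (2 * q - 1) / q := div_nonneg (pow_nonneg ht.1 _) q.cast_nonneg
  calc exp (-t / ε) * ‖∫ s in 0..t, ∫ r in 0..s, g r‖ ^ q
      ≤ exp (-t / ε) * (t ^ (2 * q - 1) / q * ∫ r in 0..t, ‖g r‖ ^ q) := by
        gcongr
        exact norm_integral_integral_pow_le hq ht.1 (hgq.mono_set hsub)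
    _ = t ^ (2 * q - 1) / q * (exp (-t / ε) * ∫ r in 0..t, ‖g r‖ ^ q) := by ring
    _ ≤ t ^ (2 * q - 1) / q * ∫ r in 0..t, exp (-r / ε) * ‖g r‖ ^ q :=
        mul_le_mul_of_nonneg_left (mul_intervalIntegral_le_of_antitoneOn ht.1 hexp
          (fun _ _ => by positivity) (hgq.mono_set hsub) (hwgq.mono_set hsub)) hcoef
    _ ≤ t ^ (2 * q - 1) / q * ∫ r in 0..T, exp (-r / ε) * ‖g r‖ ^ q :=
        mul_le_mul_of_nonneg_left (intervalIntegral.integral_mono_interval le_rfl ht.1 ht.2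
          (.of_forall fun _ => by positivity) hwgq) hcoef

end

theorem stmt1_general
    {X : Type*} [NormedAddCommGroup X] [NormedSpace ℝ X]
    (T ε : ℝ) (hT : 0 < T) (hε : 0 < ε) (q : ℕ) (hq : 1 < q)
    (u u'' : ℝ → X)
    (hint : IntervalIntegrable (fun t => exp (-t/ε) * ‖u'' t‖ ^ q) volume 0 T)
    (hftc : ∀ t ∈ Set.Icc (0:ℝ) T,
      u t = ∫ s in (0:ℝ)..t, ∫ r in (0:ℝ)..s, u'' r) :
    (∫ t in (0:ℝ)..T, exp (-t/ε) * ‖u t‖ ^ q)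
      ≤ T ^ (2 * q) / (2 * (q : ℝ) ^ 2) *
        ∫ t in (0:ℝ)..T, exp (-t/ε) * ‖u'' t‖ ^ q := by
  have hq0 : q ≠ 0 := by omega
  set J := ∫ t in (0:ℝ)..T, exp (-t/ε) * ‖u'' t‖ ^ q
  calc (∫ t in (0:ℝ)..T, exp (-t/ε) * ‖u t‖ ^ q) ≤ ∫ t in (0:ℝ)..T, t ^ (2 * q - 1) / q * J := by
        simp only [intervalIntegral.integral_of_le hT.le]
        refine integral_mono_of_nonneg (.of_forall fun _ => by positivity)
          ((by fun_prop : Continuous fun t : ℝ => t ^ (2 * q - 1) / q * J).integrableOn_Ioc)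
          ((ae_restrict_iff' measurableSet_Ioc).2 (.of_forall fun t ht => ?_))
        dsimp only
        rw [hftc t (Ioc_subset_Icc_self ht)]
        exact exp_mul_norm_integral_integral_pow_le hq0 hε (Ioc_subset_Icc_self ht) hint
    _ = T ^ (2 * q) / (2 * (q : ℝ) ^ 2) * J := by
        simp only [div_mul_eq_mul_div, intervalIntegral.integral_div,
          intervalIntegral.integral_mul_const, integral_pow]
        rw [show 2 * q - 1 + 1 = 2 * q by omega, Nat.cast_sub (by omega), zero_pow (by omega)]
        push_cast
        field_simp
        ring

/-- weighted Poincaré-type inequality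
`∫₀ᵀ e^{-t/ε}‖u(t)‖^q dt ≤ (T^{2q}/(2q²)) ∫₀ᵀ e^{-t/ε}‖u_tt(t)‖^q dt`
for `u ∈ H²(0,T;L^q(Ω))` with `u(0)=0`, `u_t(0)=0`, and `ε > 0`. -/
theorem stmt1
    {X : Type*} [NormedAddCommGroup X] [NormedSpace ℝ X] [CompleteSpace X]
    (T ε : ℝ) (hT : 0 < T) (hε : 0 < ε) (q : ℕ) (hq : 1 < q)
    (u u' u'' : ℝ → X)
    (hu' : ∀ t ∈ Set.Icc (0:ℝ) T, HasDerivAt u (u' t) t)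
    (hu'' : ∀ t ∈ Set.Icc (0:ℝ) T, HasDerivAt u' (u'' t) t)
    (hu0 : u 0 = 0) (hu'0 : u' 0 = 0)
    (hint : IntervalIntegrable (fun t => exp (-t/ε) * ‖u'' t‖ ^ q) volume 0 T)
    (hintu : IntervalIntegrable (fun t => exp (-t/ε) * ‖u t‖ ^ q) volume 0 T)
    (hftc : ∀ t ∈ Set.Icc (0:ℝ) T,
      u t = ∫ s in (0:ℝ)..t, ∫ r in (0:ℝ)..s, u'' r) :
    (∫ t in (0:ℝ)..T, exp (-t/ε) * ‖u t‖ ^ q)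
      ≤ T ^ (2 * q) / (2 * (q : ℝ) ^ 2) *
        ∫ t in (0:ℝ)..T, exp (-t/ε) * ‖u'' t‖ ^ q :=
  stmt1_general T ε hT hε q hq u u'' hint hftc
end

section
/- For ε > 0 and functions u ∈ H^2(0,T;L^2(Ω)) with u(0)=0, u_t(0)=0: ∫_0^T e^{-t/ε} ‖u(t)‖_{L^2(Ω)}^2 dt ≤ (T^4/8) ∫_0^T e^{-t/ε} ‖u_tt(t)‖_{L^2(Ω)}^2 dt. In particular the exponentially weighted H^2-seminorm ‖u_tt‖_{L^2_ε(L^2)} defines a norm on the subspace of H^2(0,T;L^2(Ω)) with zero initial position and velocity. -/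
open MeasureTheory Real Set

/-!
Write `I = ∫₀ᵀ e^{-r/ε}‖u''(r)‖² dr`. For `r ≤ t` and any `c > 0`, AM–GM gives
`‖u''(r)‖ ≤ (c e^{t/ε} + e^{-r/ε}‖u''(r)‖²/c) / 2`, so `‖∫₀ˢ u''‖ ≤ (c e^{t/ε} s + I/c) / 2`
for `s ≤ t`. Integrating once more, `‖u(t)‖ ≤ c (e^{t/ε} t²/4) + (t I/2)/c`, and optimising
over `c` yields `e^{-t/ε}‖u(t)‖² ≤ t³ I / 2`; a last integration over `[0, T]` gives `T⁴/8`.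
-/

lemma sq_le_four_mul_of_forall_le_mul_add_div {x A B : ℝ} (hx : 0 ≤ x) (hA : 0 ≤ A)
    (hB : 0 ≤ B) (h : ∀ c > 0, x ≤ c * A + B / c) : x ^ 2 ≤ 4 * A * B := by
  rcases hx.eq_or_lt with rfl | hx
  · nlinarith [mul_nonneg hA hB]
  rcases hA.eq_or_lt with rfl | hA
  · have hc := h ((B + 1) / x) (by positivity)
    rw [mul_zero, zero_add, div_div_eq_mul_div, le_div_iff₀ (by positivity)] at hc
    nlinarith
  · have hc := h (x / (2 * A)) (by positivity)
    rw [div_div_eq_mul_div] at hc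
    field_simp at hc
    nlinarith

lemma le_half_mul_add_mul_sq_div {y w M c : ℝ} (hc : 0 < c) (hw : 0 < w) (hM : w⁻¹ ≤ M) :
    y ≤ (c * M + w * y ^ 2 / c) / 2 := by
  have amgm : 2 * y ≤ c * w⁻¹ + w * y ^ 2 / c := by
    have key : c * w⁻¹ + w * y ^ 2 / c - 2 * y = (c - w * y) ^ 2 / (c * w) := by
      field_simp; ring
    linarith [show 0 ≤ (c - w * y) ^ 2 / (c * w) by positivity]
  have : c * w⁻¹ ≤ c * M := by gcongr
  linarith

section Weighted

variable {X : Type*} [NormedAddCommGroup X] [NormedSpace ℝ X]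

lemma norm_intervalIntegral_le_weighted_amgm {f : ℝ → X} {w : ℝ → ℝ} {a b M c : ℝ}
    (hab : a ≤ b) (hc : 0 < c) (hw : ∀ r ∈ Icc a b, 0 < w r) (hM : ∀ r ∈ Icc a b, (w r)⁻¹ ≤ M)
    (hint : IntervalIntegrable (fun r => w r * ‖f r‖ ^ 2) volume a b) :
    ‖∫ r in a..b, f r‖ ≤ (c * M * (b - a) + (∫ r in a..b, w r * ‖f r‖ ^ 2) / c) / 2 := by
  calc ‖∫ r in a..b, f r‖ ≤ ∫ r in a..b, (c * M + w r * ‖f r‖ ^ 2 / c) / 2 :=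
        intervalIntegral.norm_integral_le_of_norm_le hab
          (ae_of_all _ fun r hr => le_half_mul_add_mul_sq_div hc (hw r (Ioc_subset_Icc_self hr))
            (hM r (Ioc_subset_Icc_self hr)))
          ((intervalIntegrable_const.add (hint.div_const c)).div_const 2)
    _ = _ := by
        rw [intervalIntegral.integral_div,
          intervalIntegral.integral_add intervalIntegrable_const (hint.div_const c),
          intervalIntegral.integral_div, intervalIntegral.integral_const, smul_eq_mul]
        ring

lemma sq_norm_iteratedIntegral_le_weighted {f : ℝ → X} {w : ℝ → ℝ} {t M : ℝ} (ht : 0 ≤ t)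
    (hw : ∀ r ∈ Icc 0 t, 0 < w r) (hM : ∀ r ∈ Icc 0 t, (w r)⁻¹ ≤ M)
    (hint : IntervalIntegrable (fun r => w r * ‖f r‖ ^ 2) volume 0 t) :
    ‖∫ s in 0..t, ∫ r in 0..s, f r‖ ^ 2 ≤ M * t ^ 3 / 2 * ∫ r in 0..t, w r * ‖f r‖ ^ 2 := by
  set J := ∫ r in 0..t, w r * ‖f r‖ ^ 2
  have hwf : ∀ r ∈ Icc 0 t, 0 ≤ w r * ‖f r‖ ^ 2 := fun r hr => by
    have := hw r hr; positivity
  have hJ : 0 ≤ J := intervalIntegral.integral_nonneg ht hwf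
  have hM0 : 0 ≤ M := (inv_pos.2 (hw t ⟨ht, le_rfl⟩)).le.trans (hM t ⟨ht, le_rfl⟩)
  have bound : ∀ c > 0, ‖∫ s in 0..t, ∫ r in 0..s, f r‖ ≤ c * (M * t ^ 2 / 4) + t * J / 2 / c := by
    intro c hc
    have inner : ∀ s ∈ Icc 0 t, ‖∫ r in 0..s, f r‖ ≤ (c * M * s + J / c) / 2 := by
      intro s hs
      have hsub : Icc 0 s ⊆ Icc 0 t := Icc_subset_Icc_right hs.2
      have hJs : ∫ r in 0..s, w r * ‖f r‖ ^ 2 ≤ J :=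
        intervalIntegral.integral_mono_interval le_rfl hs.1 hs.2
          ((ae_restrict_iff' measurableSet_Ioc).2
            (ae_of_all _ fun r hr => hwf r (Ioc_subset_Icc_self hr))) hint
      calc ‖∫ r in 0..s, f r‖
          ≤ (c * M * (s - 0) + (∫ r in 0..s, w r * ‖f r‖ ^ 2) / c) / 2 :=
            norm_intervalIntegral_le_weighted_amgm hs.1 hc (fun r hr => hw r (hsub hr))
              (fun r hr => hM r (hsub hr)) (hint.mono_set (by simpa [uIcc_of_le, hs.1, ht]))
        _ ≤ (c * M * s + J / c) / 2 := by gcongr; simp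
    calc ‖∫ s in 0..t, ∫ r in 0..s, f r‖
        ≤ ∫ s in 0..t, (c * M * s + J / c) / 2 :=
          intervalIntegral.norm_integral_le_of_norm_le ht
            (ae_of_all _ fun s hs => inner s (Ioc_subset_Icc_self hs))
            (Continuous.intervalIntegrable (by fun_prop) _ _)
      _ = c * (M * t ^ 2 / 4) + t * J / 2 / c := by
          rw [intervalIntegral.integral_div, intervalIntegral.integral_add
            (Continuous.intervalIntegrable (by fun_prop) _ _) intervalIntegrable_const,
            intervalIntegral.integral_const_mul, integral_id, intervalIntegral.integral_const,
            smul_eq_mul]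
          field_simp
          ring
  calc ‖∫ s in 0..t, ∫ r in 0..s, f r‖ ^ 2 ≤ 4 * (M * t ^ 2 / 4) * (t * J / 2) :=
        sq_le_four_mul_of_forall_le_mul_add_div (norm_nonneg _) (by positivity) (by positivity)
          bound
    _ = M * t ^ 3 / 2 * J := by ring

lemma exp_neg_div_mul_sq_norm_iteratedIntegral_le {f : ℝ → X} {ε t : ℝ} (hε : 0 ≤ ε)
    (ht : 0 ≤ t) (hint : IntervalIntegrable (fun r => exp (-r/ε) * ‖f r‖ ^ 2) volume 0 t) :
    exp (-t/ε) * ‖∫ s in 0..t, ∫ r in 0..s, f r‖ ^ 2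
      ≤ t ^ 3 / 2 * ∫ r in 0..t, exp (-r/ε) * ‖f r‖ ^ 2 := by
  have hf := sq_norm_iteratedIntegral_le_weighted (M := exp (t/ε)) ht (fun r _ => exp_pos _)
    (fun r hr => by
      rw [← exp_neg, neg_div, neg_neg]
      exact exp_le_exp.2 (div_le_div_of_nonneg_right hr.2 hε)) hint
  calc exp (-t/ε) * ‖∫ s in 0..t, ∫ r in 0..s, f r‖ ^ 2
      ≤ exp (-t/ε) * (exp (t/ε) * t ^ 3 / 2 * ∫ r in 0..t, exp (-r/ε) * ‖f r‖ ^ 2) := by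
        gcongr
    _ = t ^ 3 / 2 * ∫ r in 0..t, exp (-r/ε) * ‖f r‖ ^ 2 := by
        rw [mul_div_assoc, ← mul_assoc, ← mul_assoc, ← exp_add, neg_div, neg_add_cancel,
          exp_zero, one_mul]

end Weighted

theorem stmt2_general
    {X : Type*} [NormedAddCommGroup X] [NormedSpace ℝ X]
    (T ε : ℝ) (hT : 0 < T) (hε : 0 < ε)
    (u u'' : ℝ → X)
    (hint : IntervalIntegrable (fun t => exp (-t/ε) * ‖u'' t‖ ^ 2) volume 0 T)
    (hftc : ∀ t ∈ Set.Icc (0:ℝ) T,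
      u t = ∫ s in (0:ℝ)..t, ∫ r in (0:ℝ)..s, u'' r) :
    ((∫ t in (0:ℝ)..T, exp (-t/ε) * ‖u t‖ ^ 2)
      ≤ T ^ 4 / 8 * ∫ t in (0:ℝ)..T, exp (-t/ε) * ‖u'' t‖ ^ 2)
    ∧ ((∫ t in (0:ℝ)..T, exp (-t/ε) * ‖u'' t‖ ^ 2) = 0 →
        ∀ t ∈ Set.Icc (0:ℝ) T, u t = 0) := by
  set I := ∫ t in (0:ℝ)..T, exp (-t/ε) * ‖u'' t‖ ^ 2
  have weighted : ∀ t ∈ Icc 0 T, exp (-t/ε) * ‖u t‖ ^ 2 ≤ t ^ 3 / 2 * I := by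
    intro t ht
    have ht0 : 0 ≤ t := ht.1
    have hIt : ∫ r in 0..t, exp (-r/ε) * ‖u'' r‖ ^ 2 ≤ I :=
      intervalIntegral.integral_mono_interval le_rfl ht0 ht.2
        (ae_of_all _ fun r => by positivity) hint
    rw [hftc t ht]
    refine (exp_neg_div_mul_sq_norm_iteratedIntegral_le hε.le ht0
      (hint.mono_set (uIcc_subset_uIcc_left (by simpa [uIcc_of_le hT.le] using ht)))).trans ?_
    gcongr
  refine ⟨?_, fun hI t ht => ?_⟩
  · calc (∫ t in (0:ℝ)..T, exp (-t/ε) * ‖u t‖ ^ 2)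
        ≤ ‖∫ t in (0:ℝ)..T, exp (-t/ε) * ‖u t‖ ^ 2‖ := Real.le_norm_self _
      _ ≤ ∫ t in (0:ℝ)..T, t ^ 3 / 2 * I :=
          intervalIntegral.norm_integral_le_of_norm_le hT.le
            (ae_of_all _ fun t ht => by
              rw [Real.norm_of_nonneg (by positivity)]
              exact weighted t (Ioc_subset_Icc_self ht))
            (Continuous.intervalIntegrable (by fun_prop) _ _)
      _ = T ^ 4 / 8 * I := by
          rw [intervalIntegral.integral_mul_const, intervalIntegral.integral_div, integral_pow]
          ring
  · have h := weighted t ht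
    rw [hI, mul_zero] at h
    have : ‖u t‖ ^ 2 ≤ 0 := nonpos_of_mul_nonpos_right h (exp_pos _)
    simpa using this

/-- for `ε > 0` and `u ∈ H²(0,T;L²(Ω))` with `u(0)=0`, `u_t(0)=0`:
`∫₀ᵀ e^{-t/ε}‖u(t)‖² dt ≤ (T⁴/8) ∫₀ᵀ e^{-t/ε}‖u_tt(t)‖² dt`; in particular the
weighted `H²`-seminorm `‖u_tt‖_{L²_ε(L²)}` is a norm on the subspace with zero
initial position and velocity (i.e. if it vanishes, then `u ≡ 0` on `[0,T]`). -/
theorem stmt2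
    {X : Type*} [NormedAddCommGroup X] [NormedSpace ℝ X] [CompleteSpace X]
    (T ε : ℝ) (hT : 0 < T) (hε : 0 < ε)
    (u u' u'' : ℝ → X)
    (hu' : ∀ t ∈ Set.Icc (0:ℝ) T, HasDerivAt u (u' t) t)
    (hu'' : ∀ t ∈ Set.Icc (0:ℝ) T, HasDerivAt u' (u'' t) t)
    (hu0 : u 0 = 0) (hu'0 : u' 0 = 0)
    (hint : IntervalIntegrable (fun t => exp (-t/ε) * ‖u'' t‖ ^ 2) volume 0 T)
    (hintu : IntervalIntegrable (fun t => exp (-t/ε) * ‖u t‖ ^ 2) volume 0 T)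
    (hftc : ∀ t ∈ Set.Icc (0:ℝ) T,
      u t = ∫ s in (0:ℝ)..t, ∫ r in (0:ℝ)..s, u'' r) :
    ((∫ t in (0:ℝ)..T, exp (-t/ε) * ‖u t‖ ^ 2)
      ≤ T ^ 4 / 8 * ∫ t in (0:ℝ)..T, exp (-t/ε) * ‖u'' t‖ ^ 2)
    ∧ ((∫ t in (0:ℝ)..T, exp (-t/ε) * ‖u'' t‖ ^ 2) = 0 →
        ∀ t ∈ Set.Icc (0:ℝ) T, u t = 0) :=
  stmt2_general T ε hT hε u u'' hint hftc
end
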